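/- If a homeomorphism f of a compact metric space has the L-shadowing property and is expansive, then it is asymptotically expansive; conversely, under L-shadowing, asymptotic expansiveness implies expansiveness. In particular a homeomorphism with the shadowing property and an expansive non-wandering set that is not expansive on the whole space is not asymptotically expansive and does not have uniform contractions on its local stable/unstable sets. -/

import Mathlib

/-!
Expansiveness gives asymptotic expansiveness because `Vˢ ⊆ Wˢ` and `Vᵘ ⊆ Wᵘ`. Conversely, let
`f` be `ε`-asymptotically expansive with L-shadowing, and let the orbit of `y` stay `c`-close to
that of `x`, for `c` small. If `d(fᵏy, fᵏx)` is frequently small as `k → ∞`, gluing the past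
orbit of `y` to the future orbit of `x` at such times gives limit pseudo-orbits with arbitrarily
small jumps. Their shadows are bi-asymptotic and `ε`-close, hence all equal; as they approximate
`y` to any precision, they equal `y`, so `y ∈ Wˢ(x)`; backwards likewise. Otherwise a limit pair `(p, q)` has orbits at distance
in `[γ, c]` at all times. Taking `(p, q)` in a minimal set of `f × f` makes it backward
recurrent. Connecting `p` to `q` and then `q` back to a time-shift of `p` by shadowing gives two
limit pseudo-orbits whose shadows must coincide, although the pseudo-orbits are `γ` apart at
one time.

If `f` is `c₀`-expansive on `Ω(f)`, two orbits that stay `c₀`-close are bi-asymptotic, because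
limit pairs of the two orbits lie in `Ω(f) × Ω(f)`. So in that case asymptotic expansiveness
gives expansiveness. Uniform contractions give it too: the contraction turns a `c`-close pair
into an `r`-close one for every `r`.
-/

open Topology Filter Metric TopologicalSpace

namespace LS

variable {X Y : Type*} [MetricSpace X] [MetricSpace Y]

/-- finite forward iterates of a homeomorphism -/
def hpowAux (f : X ≃ₜ X) : ℕ → X ≃ₜ X
  | 0 => Homeomorph.refl X
  | n+1 => (hpowAux f n).trans f

/-- `ℤ`-iterates of a homeomorphism: `hpow f k` is the `k`-th iterate `f^k`. -/
def hpow (f : X ≃ₜ X) : ℤ → X ≃ₜ X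
  | Int.ofNat n => hpowAux f n
  | Int.negSucc n => (hpowAux f (n+1)).symm

/-- the `ℤ`-iteration map of `f` -/
def F (f : X ≃ₜ X) : ℤ → X → X := fun k => hpow f k

/-- δ-limit-pseudo-orbit for a system given by its iterate family `T` -/
def IsLimitPseudoOrbit (T : ℤ → Y → Y) (δ : ℝ) (x : ℤ → Y) : Prop :=
  (∀ k : ℤ, dist (T 1 (x k)) (x (k+1)) ≤ δ) ∧
  Tendsto (fun k : ℤ => dist (T 1 (x k)) (x (k+1))) (cocompact ℤ) (𝓝 0)

/-- `z` ε-limit-shadows the sequence `x` -/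
def LimitShadows (T : ℤ → Y → Y) (ε : ℝ) (x : ℤ → Y) (z : Y) : Prop :=
  (∀ k : ℤ, dist (T k z) (x k) ≤ ε) ∧
  Tendsto (fun k : ℤ => dist (T k z) (x k)) (cocompact ℤ) (𝓝 0)

/-- the L-shadowing property -/
def LShadowing (T : ℤ → Y → Y) : Prop :=
  ∀ ε > (0:ℝ), ∃ δ > (0:ℝ), ∀ x : ℤ → Y, IsLimitPseudoOrbit T δ x → ∃ z, LimitShadows T ε x z

/-- the shadowing property -/
def Shadowing (T : ℤ → Y → Y) : Prop :=
  ∀ ε > (0:ℝ), ∃ δ > (0:ℝ), ∀ x : ℤ → Y,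
    (∀ k : ℤ, dist (T 1 (x k)) (x (k+1)) < δ) → ∃ z, ∀ k : ℤ, dist (T k z) (x k) < ε

/-- local c-stable set -/
def Ws (f : X ≃ₜ X) (c : ℝ) (x : X) : Set X :=
  {y | ∀ k : ℤ, 0 ≤ k → dist (F f k y) (F f k x) ≤ c}

/-- local c-unstable set -/
def Wu (f : X ≃ₜ X) (c : ℝ) (x : X) : Set X :=
  {y | ∀ k : ℤ, k ≤ 0 → dist (F f k y) (F f k x) ≤ c}

/-- stable set -/
def WsA (f : X ≃ₜ X) (x : X) : Set X :=
  {y | Tendsto (fun k : ℤ => dist (F f k y) (F f k x)) atTop (𝓝 0)}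

/-- unstable set -/
def WuA (f : X ≃ₜ X) (x : X) : Set X :=
  {y | Tendsto (fun k : ℤ => dist (F f k y) (F f k x)) atBot (𝓝 0)}

/-- asymptotic local stable set -/
def Vs (f : X ≃ₜ X) (c : ℝ) (x : X) : Set X := WsA f x ∩ Ws f c x

/-- asymptotic local unstable set -/
def Vu (f : X ≃ₜ X) (c : ℝ) (x : X) : Set X := WuA f x ∩ Wu f c x

/-- image of a nonempty compact set under a homeomorphism -/
def himg (f : X ≃ₜ X) (A : NonemptyCompacts X) : NonemptyCompacts X :=
  ⟨⟨f '' A, A.isCompact.image f.continuous⟩, A.nonempty.image f⟩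

/-- the `ℤ`-iteration family of the induced hyperspace map `2^f` -/
def HF (f : X ≃ₜ X) : ℤ → NonemptyCompacts X → NonemptyCompacts X :=
  fun k A => himg (hpow f k) A

end LS

/-- the non-wandering set of `f` -/
def LS.Omega {X : Type*} [MetricSpace X] (f : X ≃ₜ X) : Set X :=
  {x | ∀ η > (0:ℝ), ∃ y : X, dist x y < η ∧ ∃ n : ℕ, 0 < n ∧ dist (LS.F f n y) x < η}

/-- uniform contractions on local stable/unstable sets -/
def LS.UnifContr {X : Type*} [MetricSpace X] (f : X ≃ₜ X) : Prop :=
  ∃ ε > (0:ℝ), ∀ r > (0:ℝ), ∃ k : ℕ, ∀ x : X, ∀ n : ℕ, k ≤ n →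
    (LS.F f n '' LS.Ws f ε x ⊆ LS.Ws f r (LS.F f n x)) ∧
    (LS.F f (-(n:ℤ)) '' LS.Wu f ε x ⊆ LS.Wu f r (LS.F f (-(n:ℤ)) x))

open Set

namespace LS

section Iterates

variable {X : Type*} [MetricSpace X] (f : X ≃ₜ X)

lemma hpowAux_toEquiv : ∀ n : ℕ, (hpowAux f n).toEquiv = f.toEquiv ^ n
  | 0 => rfl
  | n + 1 => by rw [pow_succ', ← hpowAux_toEquiv n]; rfl

lemma F_eq_zpow (k : ℤ) (x : X) : F f k x = (f.toEquiv ^ k) x := by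
  cases k with
  | ofNat n => rw [Int.ofNat_eq_natCast, zpow_natCast, ← hpowAux_toEquiv]; rfl
  | negSucc n => rw [zpow_negSucc, ← hpowAux_toEquiv]; rfl

lemma F_add (a b : ℤ) (x : X) : F f (a + b) x = F f a (F f b x) := by
  simp only [F_eq_zpow, zpow_add, Equiv.Perm.mul_apply]

@[simp] lemma F_zero (x : X) : F f 0 x = x := by simp [F_eq_zpow]

lemma F_neg_F (k : ℤ) (x : X) : F f (-k) (F f k x) = x := by
  rw [← F_add, neg_add_cancel, F_zero]

lemma F_one_F (k : ℤ) (x : X) : F f 1 (F f k x) = F f (k + 1) x := by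
  rw [← F_add, add_comm]

lemma continuous_F (k : ℤ) : Continuous (F f k) := (hpow f k).continuous

end Iterates

section Expansive

variable {X : Type*} [MetricSpace X] (f : X ≃ₜ X)

def IsExpansiveWith (c : ℝ) : Prop := ∀ x, Ws f c x ∩ Wu f c x = {x}

def IsAsympExpansiveWith (ε : ℝ) : Prop := ∀ x, Vs f ε x ∩ Vu f ε x = {x}

variable {f}

lemma mem_Ws_inter_Wu_iff {c : ℝ} {x y : X} :
    y ∈ Ws f c x ∩ Wu f c x ↔ ∀ k, dist (F f k y) (F f k x) ≤ c :=
  ⟨fun ⟨hs, hu⟩ k => (le_total 0 k).elim (hs k) (hu k), fun h => ⟨fun k _ => h k, fun k _ => h k⟩⟩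

lemma mem_Vs_inter_Vu_iff {ε : ℝ} {x y : X} :
    y ∈ Vs f ε x ∩ Vu f ε x ↔ (∀ k, dist (F f k y) (F f k x) ≤ ε) ∧
      Tendsto (fun k => dist (F f k y) (F f k x)) (cocompact ℤ) (𝓝 0) := by
  rw [cocompact_eq_atBot_atTop, tendsto_sup, ← mem_Ws_inter_Wu_iff]
  exact ⟨fun ⟨⟨hs, hs'⟩, hu, hu'⟩ => ⟨⟨hs', hu'⟩, hu, hs⟩,
    fun ⟨⟨hs', hu'⟩, hu, hs⟩ => ⟨⟨hs, hs'⟩, hu, hu'⟩⟩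

lemma isExpansiveWith_iff {c : ℝ} (hc : 0 ≤ c) :
    IsExpansiveWith f c ↔ ∀ x y, (∀ k, dist (F f k y) (F f k x) ≤ c) → y = x := by
  simp only [IsExpansiveWith, eq_singleton_iff_unique_mem, mem_Ws_inter_Wu_iff, dist_self]
  exact ⟨fun h x => (h x).2, fun h x => ⟨fun _ => hc, h x⟩⟩

lemma IsAsympExpansiveWith.eq_of_tendsto {ε : ℝ} (h : IsAsympExpansiveWith f ε) {x y : X}
    (hle : ∀ k, dist (F f k y) (F f k x) ≤ ε)
    (hlim : Tendsto (fun k => dist (F f k y) (F f k x)) (cocompact ℤ) (𝓝 0)) : y = x := by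
  have hy := mem_Vs_inter_Vu_iff.2 ⟨hle, hlim⟩
  rwa [h x] at hy

lemma IsExpansiveWith.isAsympExpansiveWith {c : ℝ} (h : IsExpansiveWith f c) :
    IsAsympExpansiveWith f c := by
  intro x
  have hx := mem_Ws_inter_Wu_iff.1 ((h x).ge (mem_singleton x))
  refine eq_singleton_iff_unique_mem.2
    ⟨mem_Vs_inter_Vu_iff.2 ⟨hx, by simp⟩, fun y hy => ?_⟩
  exact (h x).le ⟨hy.1.2, hy.2.2⟩

lemma exists_isExpansiveWith_of_unifContr (h : UnifContr f) : ∃ c > 0, IsExpansiveWith f c := by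
  obtain ⟨ε, hε, hcontr⟩ := h
  refine ⟨ε, hε, (isExpansiveWith_iff hε.le).2 fun x y hxy => eq_of_forall_dist_le fun r hr => ?_⟩
  obtain ⟨K, hK⟩ := hcontr r hr
  have hyK : F f K y ∈ Wu f ε (F f K x) := fun j _ => by simpa only [← F_add] using hxy (j + K)
  have hy := (hK (F f K x) K le_rfl).2 ⟨_, hyK, rfl⟩ 0 le_rfl
  simpa only [F_neg_F, F_zero] using hy

end Expansive

section NonWandering

variable {X : Type*} [MetricSpace X] (f : X ≃ₜ X)

lemma mem_Omega_of_tendsto {t : ℕ → ℤ} {x p : X} (ht : Tendsto t atTop (cocompact ℤ))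
    (hp : Tendsto (fun n => F f (t n) x) atTop (𝓝 p)) : p ∈ Omega f := by
  intro η hη
  obtain ⟨N, hN⟩ := Metric.tendsto_atTop.1 hp η hη
  obtain ⟨n, hn, hne⟩ := ((eventually_ge_atTop N).and
    (ht.eventually (isCompact_singleton (x := t N)).compl_mem_cocompact)).exists
  have hclose : ∀ a, a = t n ∨ a = t N → dist (F f a x) p < η := by
    rintro a (rfl | rfl)
    exacts [hN n hn, hN N le_rfl]
  set a := min (t n) (t N)
  set b := max (t n) (t N)
  have hab : a < b := min_lt_max.2 hne
  refine ⟨F f a x, by rw [dist_comm]; exact hclose a (min_choice _ _), (b - a).toNat,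
    by omega, ?_⟩
  rw [← F_add, show ((b - a).toNat : ℤ) + a = b by omega]
  exact hclose b (max_choice _ _)

variable [CompactSpace X]

lemma exists_subseq_tendsto_pair (t : ℕ → ℤ) (x y : X) :
    ∃ (p q : X) (φ : ℕ → ℕ), StrictMono φ ∧
      Tendsto (fun n => F f (t (φ n)) x) atTop (𝓝 p) ∧
      Tendsto (fun n => F f (t (φ n)) y) atTop (𝓝 q) ∧
      ∀ m, Tendsto (fun n => dist (F f (m + t (φ n)) y) (F f (m + t (φ n)) x)) atTop
        (𝓝 (dist (F f m q) (F f m p))) := by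
  obtain ⟨⟨p, q⟩, φ, hφ, hpq⟩ := CompactSpace.tendsto_subseq fun n => (F f (t n) x, F f (t n) y)
  have hp := (continuous_fst.tendsto _).comp hpq
  have hq := (continuous_snd.tendsto _).comp hpq
  refine ⟨p, q, φ, hφ, hp, hq, fun m => ?_⟩
  simp_rw [F_add]
  exact (((continuous_F f m).tendsto q).comp hq).dist (((continuous_F f m).tendsto p).comp hp)

lemma tendsto_dist_of_expansive_Omega {c : ℝ}
    (hΩ : ∀ x ∈ Omega f, ∀ y ∈ Omega f, (∀ k, dist (F f k y) (F f k x) ≤ c) → y = x)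
    {x y : X} (h : ∀ k, dist (F f k y) (F f k x) ≤ c) :
    Tendsto (fun k => dist (F f k y) (F f k x)) (cocompact ℤ) (𝓝 0) := by
  by_contra hlim
  obtain ⟨η, hη, hfreq⟩ : ∃ η > 0, ∃ᶠ k in cocompact ℤ, η ≤ dist (F f k y) (F f k x) := by
    simpa only [Metric.tendsto_nhds, not_forall, not_eventually, not_lt, Real.dist_eq, sub_zero,
      abs_of_nonneg dist_nonneg, exists_prop] using hlim
  have : (cocompact ℤ).IsCountablyGenerated := by
    rw [cocompact_eq_atBot_atTop]; infer_instance
  obtain ⟨t, ht, htη⟩ := exists_seq_forall_of_frequently hfreq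
  obtain ⟨p, q, φ, hφ, hp, hq, hdist⟩ := exists_subseq_tendsto_pair f t x y
  have htφ := ht.comp hφ.tendsto_atTop
  have hqp : q = p := hΩ p (mem_Omega_of_tendsto f htφ hp) q (mem_Omega_of_tendsto f htφ hq)
    fun m => le_of_tendsto (hdist m) (Eventually.of_forall fun n => h _)
  have hηqp := ge_of_tendsto (hdist 0) (Eventually.of_forall fun n => by simpa using htη (φ n))
  simp [hqp] at hηqp
  linarith

lemma isExpansiveWith_of_expansive_Omega {ε c : ℝ} (hε : 0 < ε) (hc : 0 < c)
    (hAE : IsAsympExpansiveWith f ε)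
    (hΩ : ∀ x ∈ Omega f, ∀ y ∈ Omega f, (∀ k, dist (F f k y) (F f k x) ≤ c) → y = x) :
    IsExpansiveWith f (min ε c) :=
  (isExpansiveWith_iff (le_min hε.le hc.le)).2 fun _ _ h =>
    hAE.eq_of_tendsto (fun k => (h k).trans (min_le_left _ _))
      (tendsto_dist_of_expansive_Omega f hΩ fun k => (h k).trans (min_le_right _ _))

end NonWandering

section Recurrence

variable {Y : Type*} [MetricSpace Y] [CompactSpace Y] {ϕ : ℤ → Y → Y}

lemma exists_minimal_isInvariant {S : Set Y} (hne : S.Nonempty) (hcl : IsClosed S)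
    (hinv : IsInvariant ϕ S) :
    ∃ M ⊆ S, Minimal (fun A : Set Y => A.Nonempty ∧ IsClosed A ∧ IsInvariant ϕ A) M := by
  refine zorn_superset_nonempty {A | A.Nonempty ∧ IsClosed A ∧ IsInvariant ϕ A}
    (fun C hC hchain hCne => ⟨⋂₀ C, ⟨?_, isClosed_sInter fun A hA => (hC hA).2.1,
      fun t z hz => mem_sInter.2 fun A hA => (hC hA).2.2 t (hz A hA)⟩,
      fun A hA => sInter_subset_of_mem hA⟩) S ⟨hne, hcl, hinv⟩
  have := hCne.to_subtype
  have hdir : DirectedOn (· ⊇ ·) C := fun A hA B hB =>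
    (hchain.total hA hB).elim (fun h => ⟨A, hA, le_rfl, h⟩) fun h => ⟨B, hB, h, le_rfl⟩
  rw [sInter_eq_iInter]
  exact IsCompact.nonempty_iInter_of_directed_nonempty_isCompact_isClosed _
    hdir.directed_val (fun A => (hC A.2).1)
    (fun A => (hC A.2).2.1.isCompact) (fun A => (hC A.2).2.1)

/-- The `α`-limit set of `z` is a nonempty closed invariant subset of `M`, hence all of `M`. -/
lemma mem_omegaLimit_atBot_self_of_minimal (hϕ : ∀ a b y, ϕ (a + b) y = ϕ a (ϕ b y))
    (hcont : ∀ k, Continuous (ϕ k)) {M : Set Y}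
    (hM : Minimal (fun A : Set Y => A.Nonempty ∧ IsClosed A ∧ IsInvariant ϕ A) M)
    {z : Y} (hz : z ∈ M) : z ∈ omegaLimit atBot ϕ {z} := by
  obtain ⟨-, hMcl, hMinv⟩ := hM.prop
  have hsub : omegaLimit atBot ϕ {z} ⊆ M :=
    (omegaLimit_subset_closure_image2 atBot ϕ {z} univ_mem).trans
      (closure_minimal (by rintro _ ⟨t, -, _, rfl, rfl⟩; exact hMinv t hz) hMcl)
  have hinv : IsInvariant ϕ (omegaLimit atBot ϕ {z}) := fun t =>
    (mapsTo_omegaLimit {z} (mapsTo_id _) (fun s y => (hϕ t s y).symm) (hcont t)).mono_right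
      (omegaLimit_subset_of_tendsto ϕ {z} (tendsto_atBot_add_const_left _ t tendsto_id))
  exact hM.le_of_le ⟨nonempty_omegaLimit atBot ϕ {z} (singleton_nonempty z),
    isClosed_omegaLimit _ _ _, hinv⟩ hsub hz

lemma exists_frequently_dist_lt (hϕ : ∀ a b y, ϕ (a + b) y = ϕ a (ϕ b y))
    (hcont : ∀ k, Continuous (ϕ k)) {S : Set Y} (hne : S.Nonempty) (hcl : IsClosed S)
    (hinv : IsInvariant ϕ S) :
    ∃ z ∈ S, ∀ j, ∀ η > 0, ∃ᶠ t in atBot, dist (ϕ (j + t) z) (ϕ j z) < η := by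
  obtain ⟨M, hMS, hM⟩ := exists_minimal_isInvariant hne hcl hinv
  obtain ⟨z, hz⟩ := hM.prop.1
  refine ⟨z, hMS hz, fun j η hη => ?_⟩
  have hclus := ((mem_omegaLimit_singleton_iff_mapClusterPt _ _ _ _).1
    (mem_omegaLimit_atBot_self_of_minimal hϕ hcont hM hz)).continuousAt_comp (hcont j).continuousAt
  simpa only [Function.comp_def, ← hϕ, mem_ball] using
    mapClusterPt_iff_frequently.1 hclus _ (ball_mem_nhds _ hη)

end Recurrence

section Glue

variable {X : Type*} [MetricSpace X] (f : X ≃ₜ X)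

def glue (a b : X) (T k : ℤ) : X := if k ≤ T then F f k a else F f k b

variable {f} {a b : X} {T k : ℤ}

lemma glue_of_le (hk : k ≤ T) : glue f a b T k = F f k a := if_pos hk

lemma glue_of_lt (hk : T < k) : glue f a b T k = F f k b := if_neg (not_le.2 hk)

lemma isLimitPseudoOrbit_glue {δ : ℝ} (hjump : dist (F f (T + 1) a) (F f (T + 1) b) ≤ δ) :
    IsLimitPseudoOrbit (F f) δ (glue f a b T) := by
  have hzero : ∀ k ≠ T, dist (F f 1 (glue f a b T k)) (glue f a b T (k + 1)) = 0 := by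
    intro k hk
    rcases hk.lt_or_gt with hk | hk
    · rw [glue_of_le hk.le, glue_of_le (by omega), F_one_F, dist_self]
    · rw [glue_of_lt hk, glue_of_lt (by omega), F_one_F, dist_self]
  refine ⟨fun k => ?_, tendsto_const_nhds.congr' ?_⟩
  · rcases eq_or_ne k T with rfl | hk
    · rwa [glue_of_le le_rfl, glue_of_lt (lt_add_one k), F_one_F]
    · exact (hzero k hk).trans_le (dist_nonneg.trans hjump)
  · filter_upwards [isCompact_singleton.compl_mem_cocompact] with k hk
    exact (hzero k hk).symm

lemma tendsto_dist_glue {a' b' : X} {T' : ℤ}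
    (ha : Tendsto (fun k => dist (F f k a) (F f k a')) atBot (𝓝 0))
    (hb : Tendsto (fun k => dist (F f k b) (F f k b')) atTop (𝓝 0)) :
    Tendsto (fun k => dist (glue f a b T k) (glue f a' b' T' k)) (cocompact ℤ) (𝓝 0) := by
  rw [cocompact_eq_atBot_atTop, tendsto_sup]
  constructor
  · refine ha.congr' ?_
    filter_upwards [eventually_le_atBot (min T T')] with k hk
    rw [glue_of_le (hk.trans (min_le_left _ _)), glue_of_le (hk.trans (min_le_right _ _))]
  · refine hb.congr' ?_
    filter_upwards [eventually_gt_atTop (max T T')] with k hk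
    rw [glue_of_lt ((le_max_left _ _).trans_lt hk), glue_of_lt ((le_max_right _ _).trans_lt hk)]

variable {c : ℝ}

lemma dist_glue_le (hab : ∀ k, dist (F f k a) (F f k b) ≤ c) (T k : ℤ) :
    dist (glue f a b T k) (F f k a) ≤ c ∧ dist (glue f a b T k) (F f k b) ≤ c := by
  have hc : 0 ≤ c := dist_nonneg.trans (hab 0)
  unfold glue
  split_ifs <;> simp [hc, hab k, dist_comm]

lemma dist_glue_glue_le (hab : ∀ k, dist (F f k a) (F f k b) ≤ c) (T T' k : ℤ) :
    dist (glue f a b T k) (glue f a b T' k) ≤ c := by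
  have hc : 0 ≤ c := dist_nonneg.trans (hab 0)
  unfold glue
  split_ifs <;> simp [hc, hab k, dist_comm]

lemma LimitShadows.tendsto_atBot_glue {ρ : ℝ} {z : X}
    (h : LimitShadows (F f) ρ (glue f a b T) z) :
    Tendsto (fun k => dist (F f k z) (F f k a)) atBot (𝓝 0) := by
  refine (h.2.mono_left atBot_le_cocompact).congr' ?_
  filter_upwards [eventually_le_atBot T] with k hk
  rw [glue_of_le hk]

lemma LimitShadows.tendsto_atTop_glue {ρ : ℝ} {z : X}
    (h : LimitShadows (F f) ρ (glue f a b T) z) :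
    Tendsto (fun k => dist (F f k z) (F f k b)) atTop (𝓝 0) := by
  refine (h.2.mono_left atTop_le_cocompact).congr' ?_
  filter_upwards [eventually_gt_atTop T] with k hk
  rw [glue_of_lt hk]

end Glue

section AsympExpansive

variable {X : Type*} [MetricSpace X] (f : X ≃ₜ X) {ε : ℝ} (hAE : IsAsympExpansiveWith f ε)
include hAE

lemma eq_of_limitShadows {W W' : ℤ → X} {ρ ρ' : ℝ} {z z' : X}
    (hz : LimitShadows (F f) ρ W z) (hz' : LimitShadows (F f) ρ' W' z')
    (hle : ∀ k, ρ + dist (W k) (W' k) + ρ' ≤ ε)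
    (hlim : Tendsto (fun k => dist (W k) (W' k)) (cocompact ℤ) (𝓝 0)) : z = z' := by
  have htri : ∀ k, dist (F f k z) (F f k z') ≤
      dist (F f k z) (W k) + dist (W k) (W' k) + dist (F f k z') (W' k) := fun k => by
    simpa only [dist_comm (W' k)] using dist_triangle4 (F f k z) (W k) (W' k) (F f k z')
  refine hAE.eq_of_tendsto (fun k => (htri k).trans ?_)
    (squeeze_zero (fun _ => dist_nonneg) htri ?_)
  · linarith [hz.1 k, hz'.1 k, hle k]
  · simpa using (hz.2.add hlim).add hz'.2

/-- Both shadows are the same point, which is `ρ`-close to each gluing. -/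
lemma dist_glue_le_of_limitShadows {a b a' b' s s' : X} {T : ℤ} {ρ : ℝ}
    (hs : LimitShadows (F f) ρ (glue f a b T) s) (hs' : LimitShadows (F f) ρ (glue f a' b' T) s')
    (hle : ∀ k, 2 * ρ + dist (glue f a b T k) (glue f a' b' T k) ≤ ε)
    (ha : Tendsto (fun k => dist (F f k a) (F f k a')) atBot (𝓝 0))
    (hb : Tendsto (fun k => dist (F f k b) (F f k b')) atTop (𝓝 0)) (k : ℤ) :
    dist (glue f a b T k) (glue f a' b' T k) ≤ 2 * ρ := by
  obtain rfl : s = s' :=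
    eq_of_limitShadows f hAE hs hs' (fun k => by linarith [hle k]) (tendsto_dist_glue ha hb)
  linarith [dist_triangle_left (glue f a b T k) (glue f a' b' T k) (F f k s), hs.1 k, hs'.1 k]

/-- The shadows of all gluings of two `c`-close orbits are bi-asymptotic and `ε`-close, hence
equal; so a point that they approximate to any precision is this common shadow. -/
lemma eq_of_forall_limitShadows_glue {a b y z : X} {c ρ₀ : ℝ} {T₀ : ℤ} (hρ₀ : 0 < ρ₀)
    (hab : ∀ k, dist (F f k a) (F f k b) ≤ c) (hcε : c + 2 * ρ₀ ≤ ε)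
    (hz : LimitShadows (F f) ρ₀ (glue f a b T₀) z)
    (hshadow : ∀ ρ > 0, ∃ T z', LimitShadows (F f) ρ (glue f a b T) z' ∧ glue f a b T 0 = y) :
    z = y := by
  refine eq_of_forall_dist_le fun ρ hρ => ?_
  obtain ⟨T, z', hz', hy⟩ := hshadow (min ρ ρ₀) (lt_min hρ hρ₀)
  have hz'z : z' = z := eq_of_limitShadows f hAE hz' hz
    (fun k => by linarith [dist_glue_glue_le hab T T₀ k, min_le_right ρ ρ₀])
    (tendsto_dist_glue (by simp) (by simp))
  calc dist z y = dist (F f 0 z') (glue f a b T 0) := by rw [hz'z, hy, F_zero]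
    _ ≤ min ρ ρ₀ := hz'.1 0
    _ ≤ ρ := min_le_left _ _

variable (hL : LShadowing (F f)) (hε : 0 < ε)
include hL hε

lemma tendsto_atTop_of_frequently_le {x y : X} {c : ℝ} (hcε : c ≤ ε / 2)
    (h : ∀ k, dist (F f k y) (F f k x) ≤ c)
    (hfreq : ∀ γ > 0, ∃ᶠ k in atTop, dist (F f k y) (F f k x) ≤ γ) :
    Tendsto (fun k => dist (F f k y) (F f k x)) atTop (𝓝 0) := by
  have hshadow : ∀ ρ > 0, ∃ T, 0 ≤ T ∧ ∃ z, LimitShadows (F f) ρ (glue f y x T) z := by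
    intro ρ hρ
    obtain ⟨δ, hδ, hsh⟩ := hL ρ hρ
    obtain ⟨k, hk, hk1⟩ := ((hfreq δ hδ).and_eventually (eventually_ge_atTop 1)).exists
    exact ⟨k - 1, by omega, hsh _ (isLimitPseudoOrbit_glue (by simpa using hk))⟩
  obtain ⟨T₀, -, z, hz⟩ := hshadow (ε / 4) (by positivity)
  have hzy : z = y := eq_of_forall_limitShadows_glue f hAE (by positivity) h (by linarith) hz
    fun ρ hρ => by
      obtain ⟨T, hT, z', hz'⟩ := hshadow ρ hρ
      exact ⟨T, z', hz', by rw [glue_of_le hT, F_zero]⟩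
  simpa [hzy] using hz.tendsto_atTop_glue

lemma tendsto_atBot_of_frequently_le {x y : X} {c : ℝ} (hcε : c ≤ ε / 2)
    (h : ∀ k, dist (F f k y) (F f k x) ≤ c)
    (hfreq : ∀ γ > 0, ∃ᶠ k in atBot, dist (F f k y) (F f k x) ≤ γ) :
    Tendsto (fun k => dist (F f k y) (F f k x)) atBot (𝓝 0) := by
  have hshadow : ∀ ρ > 0, ∃ T, T < 0 ∧ ∃ z, LimitShadows (F f) ρ (glue f x y T) z := by
    intro ρ hρ
    obtain ⟨δ, hδ, hsh⟩ := hL ρ hρ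
    obtain ⟨k, hk, hk0⟩ := ((hfreq δ hδ).and_eventually (eventually_le_atBot 0)).exists
    exact ⟨k - 1, by omega,
      hsh _ (isLimitPseudoOrbit_glue (by simpa [dist_comm] using hk))⟩
  obtain ⟨T₀, -, z, hz⟩ := hshadow (ε / 4) (by positivity)
  have hzy : z = y := eq_of_forall_limitShadows_glue f hAE (by positivity)
    (fun k => by rw [dist_comm]; exact h k) (by linarith) hz fun ρ hρ => by
      obtain ⟨T, hT, z', hz'⟩ := hshadow ρ hρ
      exact ⟨T, z', hz', by rw [glue_of_lt hT, F_zero]⟩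
  simpa [hzy] using hz.tendsto_atBot_glue

end AsympExpansive

section SeparatedPairs

variable {X : Type*} [MetricSpace X] (f : X ≃ₜ X)

lemma frequently_dist_le_of_not_separated [CompactSpace X] {l : Filter ℤ} [l.NeBot]
    [l.IsCountablyGenerated]
    (hl : ∀ m, Tendsto (m + ·) l l) {c : ℝ}
    (hsep : ∀ p q : X, ∀ γ > 0, ¬ ∀ m, dist (F f m q) (F f m p) ∈ Icc γ c)
    {x y : X} (h : ∀ k, dist (F f k y) (F f k x) ≤ c) :
    ∀ γ > 0, ∃ᶠ k in l, dist (F f k y) (F f k x) ≤ γ := by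
  intro γ hγ
  by_contra hfreq
  obtain ⟨t, ht⟩ := exists_seq_tendsto l
  obtain ⟨p, q, φ, hφ, -, -, hdist⟩ := exists_subseq_tendsto_pair f t x y
  refine hsep p q γ hγ fun m => ⟨ge_of_tendsto (hdist m) ?_,
    le_of_tendsto (hdist m) (Eventually.of_forall fun n => h _)⟩
  exact ((hl m).comp (ht.comp hφ.tendsto_atTop)).eventually
    ((not_frequently.1 hfreq).mono fun k hk => (not_le.1 hk).le)

lemma exists_loop_time {p q w w' : X} {η : ℝ} (hη : 0 < η)
    (hw : Tendsto (fun k => dist (F f k w) (F f k q)) atTop (𝓝 0))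
    (hw' : Tendsto (fun k => dist (F f k w') (F f k q)) atBot (𝓝 0))
    (hrec : ∀ j, ∀ η > 0, ∃ᶠ t in atBot,
      dist (F f (j + t) p) (F f j p) < η ∧ dist (F f (j + t) q) (F f j q) < η) :
    ∃ B t, (∀ k, B ≤ k → dist (F f k w) (F f k q) < η) ∧
      dist (F f (B + 1) w) (F f (B + 1 + t) w') < 3 * η ∧
      dist (F f (B + 1 + t) p) (F f (B + 1) p) < η := by
  obtain ⟨B, hB⟩ := eventually_atTop.1 (hw.eventually (gt_mem_nhds hη))
  obtain ⟨N, hN⟩ := eventually_atBot.1 (hw'.eventually (gt_mem_nhds hη))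
  obtain ⟨t, ⟨htp, htq⟩, htN⟩ :=
    ((hrec (B + 1) η hη).and_eventually (eventually_le_atBot (N - B - 1))).exists
  refine ⟨B, t, hB, ?_, htp⟩
  linarith [dist_triangle4 (F f (B + 1) w) (F f (B + 1) q) (F f (B + 1 + t) q) (F f (B + 1 + t) w'),
    hB (B + 1) (by omega), dist_comm (F f (B + 1) q) (F f (B + 1 + t) q),
    dist_comm (F f (B + 1 + t) q) (F f (B + 1 + t) w'), hN (B + 1 + t) (by omega)]

variable {ε : ℝ} (hAE : IsAsympExpansiveWith f ε) (hL : LShadowing (F f)) (hε : 0 < ε)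
  {δ c : ℝ} (hδ : ∀ W, IsLimitPseudoOrbit (F f) δ W → ∃ z, LimitShadows (F f) (ε / 4) W z)
  (hcδ : c ≤ δ) (hcε : c ≤ ε / 4)
include hδ hcδ

lemma exists_heteroclinic {a b : X} (hab : ∀ k, dist (F f k a) (F f k b) ≤ c) :
    ∃ w, (∀ k, dist (F f k w) (F f k a) ≤ ε / 4 + c ∧ dist (F f k w) (F f k b) ≤ ε / 4 + c) ∧
      Tendsto (fun k => dist (F f k w) (F f k a)) atBot (𝓝 0) ∧
      Tendsto (fun k => dist (F f k w) (F f k b)) atTop (𝓝 0) := by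
  obtain ⟨w, hw⟩ := hδ _ (isLimitPseudoOrbit_glue (T := 0) (by simpa using (hab 1).trans hcδ))
  refine ⟨w, fun k => ⟨?_, ?_⟩, hw.tendsto_atBot_glue, hw.tendsto_atTop_glue⟩
  · exact (dist_triangle _ _ _).trans (add_le_add (hw.1 k) (dist_glue_le hab 0 k).1)
  · exact (dist_triangle _ _ _).trans (add_le_add (hw.1 k) (dist_glue_le hab 0 k).2)

include hAE hL hε hcε

/-- Follow a heteroclinic orbit from `p` to `q`, then, after a backward return time `t` of the
pair `(p, q)`, a time-shifted heteroclinic orbit from `q` back to `p`. This pseudo-orbit and the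
orbit of `p` glued to its own `t`-shift both have small jumps and are bi-asymptotic, so their
shadows coincide; but at the gluing time they are about `γ` apart. -/
lemma false_of_recurrent_of_separated {γ : ℝ} (hγ : 0 < γ) {p q : X}
    (hsep : ∀ m, dist (F f m q) (F f m p) ∈ Icc γ c)
    (hrec : ∀ j, ∀ η > 0, ∃ᶠ t in atBot,
      dist (F f (j + t) p) (F f j p) < η ∧ dist (F f (j + t) q) (F f j q) < η) : False := by
  obtain ⟨w, hw, hw_bot, hw_top⟩ := exists_heteroclinic f hδ hcδ (b := q)
    fun k => (dist_comm (F f k p) _).trans_le (hsep k).2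
  obtain ⟨w', hw', hw'_bot, hw'_top⟩ := exists_heteroclinic f hδ hcδ (a := q) (b := p)
    fun k => (hsep k).2
  obtain ⟨ρ, hρ, hργ, hρε⟩ : ∃ ρ > 0, 4 * ρ ≤ γ ∧ 4 * ρ ≤ ε :=
    ⟨min (γ / 4) (ε / 4), by positivity, by linarith [min_le_left (γ / 4) (ε / 4)],
      by linarith [min_le_right (γ / 4) (ε / 4)]⟩
  obtain ⟨δ₂, hδ₂, hsh⟩ := hL ρ hρ
  obtain ⟨η, hη, hηδ, hηρ⟩ : ∃ η > 0, 3 * η ≤ δ₂ ∧ 3 * η ≤ ρ :=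
    ⟨min δ₂ ρ / 3, by positivity, by linarith [min_le_left δ₂ ρ], by linarith [min_le_right δ₂ ρ]⟩
  obtain ⟨B, t, hB, hjump, hjump'⟩ := exists_loop_time f hη hw_top hw'_bot hrec
  have hshift : ∀ k u, F f k (F f t u) = F f (k + t) u := fun k u => (F_add f k t u).symm
  have hZ : IsLimitPseudoOrbit (F f) δ₂ (glue f w (F f t w') B) :=
    isLimitPseudoOrbit_glue (by rw [hshift]; linarith)
  have hZ' : IsLimitPseudoOrbit (F f) δ₂ (glue f p (F f t p) B) :=
    isLimitPseudoOrbit_glue (by rw [hshift, dist_comm]; linarith)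
  obtain ⟨s, hs⟩ := hsh _ hZ
  obtain ⟨s', hs'⟩ := hsh _ hZ'
  have hZZ' : ∀ k, 2 * ρ + dist (glue f w (F f t w') B k) (glue f p (F f t p) B k) ≤ ε := by
    intro k
    rcases le_or_gt k B with hk | hk
    · rw [glue_of_le hk, glue_of_le hk]; linarith [(hw k).1]
    · rw [glue_of_lt hk, glue_of_lt hk, hshift, hshift]; linarith [(hw' (k + t)).2]
  have hclose := dist_glue_le_of_limitShadows f hAE hs hs' hZZ' hw_bot
    (by simpa only [hshift, Function.comp_def, id] using
      hw'_top.comp (tendsto_atTop_add_const_right atTop t tendsto_id)) B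
  rw [glue_of_le le_rfl, glue_of_le le_rfl] at hclose
  linarith [(hsep B).1, dist_triangle (F f B q) (F f B w) (F f B p),
    (dist_comm (F f B q) (F f B w)).trans_lt (hB B le_rfl)]

lemma not_separated [CompactSpace X] (p q : X) (γ : ℝ) (hγ : 0 < γ) :
    ¬ ∀ m, dist (F f m q) (F f m p) ∈ Icc γ c := by
  intro hsep₀
  set S := {z : X × X | ∀ m, dist (F f m z.2) (F f m z.1) ∈ Icc γ c}
  have hcl : IsClosed S := by
    simp only [S, ofPred_forall]
    exact isClosed_iInter fun m => isClosed_Icc.preimage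
      (((continuous_F f m).comp continuous_snd).dist ((continuous_F f m).comp continuous_fst))
  have hinv : IsInvariant (fun k (z : X × X) => (F f k z.1, F f k z.2)) S :=
    fun k z hz m => by simpa only [← F_add] using hz (m + k)
  obtain ⟨⟨p, q⟩, hS, hrec⟩ := exists_frequently_dist_lt (fun a b z => by simp [F_add])
    (fun k => ((continuous_F f k).comp continuous_fst).prodMk
      ((continuous_F f k).comp continuous_snd))
    (show S.Nonempty from ⟨(p, q), hsep₀⟩) hcl hinv
  refine false_of_recurrent_of_separated f hAE hL hε hδ hcδ hcε hγ hS
    fun j η hη => (hrec j η hη).mono fun t ht => ?_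
  rw [Prod.dist_eq] at ht
  exact ⟨(le_max_left _ _).trans_lt ht, (le_max_right _ _).trans_lt ht⟩

end SeparatedPairs

variable {X : Type*} [MetricSpace X] [CompactSpace X] (f : X ≃ₜ X)

theorem exists_isExpansiveWith_of_isAsympExpansiveWith (hL : LShadowing (F f)) {ε : ℝ}
    (hε : 0 < ε) (hAE : IsAsympExpansiveWith f ε) : ∃ c > 0, IsExpansiveWith f c := by
  obtain ⟨δ, hδ, hsh⟩ := hL (ε / 4) (by positivity)
  obtain ⟨c, hc, hcδ, hcε⟩ : ∃ c > 0, c ≤ δ ∧ c ≤ ε / 4 :=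
    ⟨min δ (ε / 4), lt_min hδ (by positivity), min_le_left _ _, min_le_right _ _⟩
  have hsep := not_separated f hAE hL hε hsh hcδ hcε
  refine ⟨c, hc, (isExpansiveWith_iff hc.le).2 fun x y h => ?_⟩
  refine hAE.eq_of_tendsto (fun k => (h k).trans (by linarith)) ?_
  rw [cocompact_eq_atBot_atTop, tendsto_sup]
  exact ⟨tendsto_atBot_of_frequently_le f hAE hL hε (by linarith) h
      (frequently_dist_le_of_not_separated f (tendsto_atBot_add_const_left _ · tendsto_id) hsep h),
    tendsto_atTop_of_frequently_le f hAE hL hε (by linarith) h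
      (frequently_dist_le_of_not_separated f (tendsto_atTop_add_const_left _ · tendsto_id) hsep h)⟩

end LS

/-- under L-shadowing, expansiveness and asymptotic expansiveness are
equivalent; and a homeomorphism with shadowing and an expansive non-wandering set
which is not expansive is neither asymptotically expansive nor has uniform
contractions. -/
theorem stmt_16 {X : Type*} [MetricSpace X] [CompactSpace X] (f : X ≃ₜ X) :
    (LS.LShadowing (LS.F f) →
      ((∃ c > (0:ℝ), ∀ x : X, LS.Ws f c x ∩ LS.Wu f c x = {x}) ↔
        (∃ ε > (0:ℝ), ∀ x : X, LS.Vs f ε x ∩ LS.Vu f ε x = {x}))) ∧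
    ((LS.Shadowing (LS.F f) ∧
      (∃ c > (0:ℝ), ∀ x ∈ LS.Omega f, ∀ y ∈ LS.Omega f,
        (∀ k : ℤ, dist (LS.F f k y) (LS.F f k x) ≤ c) → y = x) ∧
      ¬ (∃ c > (0:ℝ), ∀ x : X, LS.Ws f c x ∩ LS.Wu f c x = {x})) →
      (¬ (∃ ε > (0:ℝ), ∀ x : X, LS.Vs f ε x ∩ LS.Vu f ε x = {x}) ∧
        ¬ LS.UnifContr f)) := by
  refine ⟨fun hL => ⟨fun ⟨c, hc, hE⟩ => ⟨c, hc, LS.IsExpansiveWith.isAsympExpansiveWith hE⟩,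
    fun ⟨ε, hε, hAE⟩ => LS.exists_isExpansiveWith_of_isAsympExpansiveWith f hL hε hAE⟩, ?_⟩
  rintro ⟨-, ⟨c, hc, hΩ⟩, hnotE⟩
  exact ⟨fun ⟨ε, hε, hAE⟩ =>
      hnotE ⟨_, lt_min hε hc, LS.isExpansiveWith_of_expansive_Omega f hε hc hAE hΩ⟩,
    fun hU => hnotE (LS.exists_isExpansiveWith_of_unifContr hU)⟩
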